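/- Let N be a positive integer, i ∈ {0, 1, …, N−1} and γ ∈ ℂ with |γ| = 1. Let K ⊂ ℂ and Ω ⊂ ℂ² ∖ {(0,0)} be compact connected sets. Assume: (a) the sequence ((a_{(n+1)N+i−1}/a_{nN+i−1})·X_{nN+i} : n ≥ 1) belongs to D̃₁(K, GL(2, ℂ)); and (b) the family {(Q̃_{nN+i}^{z,γ} : n ≥ 1) : z ∈ K} is uniformly non-degenerated. Then the limit g(α, z) = lim_{n→∞} S_{nN+i}^γ(α, z) exists for every (α, z) ∈ Ω × K, the convergence is uniform on Ω × K, and |g| is a strictly positive continuous function on Ω × K. -/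

import Mathlib

open Filter Matrix Topology

noncomputable section

/-- The operator norm of a 2×2 complex matrix (as operator on Euclidean ℂ²). -/
noncomputable def opNorm (X : Matrix (Fin 2) (Fin 2) ℂ) : ℝ :=
  ‖Matrix.toEuclideanCLM (𝕜 := ℂ) X‖

/-- Entrywise complex conjugation of a matrix. -/
def mconj (X : Matrix (Fin 2) (Fin 2) ℂ) : Matrix (Fin 2) (Fin 2) ℂ :=
  X.map (starRingEnd ℂ)

/-- Hermitian symmetrisation. -/
def symQ (X : Matrix (Fin 2) (Fin 2) ℂ) : Matrix (Fin 2) (Fin 2) ℂ :=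
  (2⁻¹ : ℂ) • (X + Xᴴ)

def Ematrix : Matrix (Fin 2) (Fin 2) ℂ := !![0, -1; 1, 0]

/-- One-step transfer matrix `B_j(z)`. -/
def Bmat (a b : ℕ → ℂ) (j : ℕ) (z : ℂ) : Matrix (Fin 2) (Fin 2) ℂ :=
  !![0, 1; -(a (j-1) / a j), (z - b j) / a j]

/-- `N`-step transfer matrix `X_n(z) = B_{n+N-1}(z) ⋯ B_n(z)`. -/
def transfer (a b : ℕ → ℂ) (N n : ℕ) (z : ℂ) : Matrix (Fin 2) (Fin 2) ℂ :=
  (((List.range N).map fun j => Bmat a b (n + j) z).reverse).prod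

/-- Generalised eigenvector associated with `z`. -/
def IsGenEigen (a b : ℕ → ℂ) (z : ℂ) (u : ℕ → ℂ) : Prop :=
  ¬(u 0 = 0 ∧ u 1 = 0) ∧
    ∀ n, 1 ≤ n → z * u n = a n * u (n+1) + b n * u n + a (n-1) * u (n-1)

/-- The twisted Stolz class `D̃₁(K, GL(2,ℂ))`. -/
def MemD1K (K : Set ℂ) (Y : ℕ → ℂ → Matrix (Fin 2) (Fin 2) ℂ) : Prop :=
  (∀ n, 1 ≤ n → ContinuousOn (Y n) K) ∧
  (∀ n, 1 ≤ n → ∀ z ∈ K, IsUnit (Y n z)) ∧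
  (∃ C : ℝ, ∀ n, 1 ≤ n → ∀ z ∈ K, opNorm (Y n z) ≤ C) ∧
  (∃ g : ℕ → ℝ, Summable g ∧ ∀ n, 1 ≤ n → ∀ z ∈ K,
      opNorm (Y (n+1) z - mconj (Y n z)) ≤ g n)

/-- The twisted Stolz class `D̃₁(ℂ)` for scalar sequences `(x_n : n ≥ 1)`. -/
def MemD1 (x : ℕ → ℂ) : Prop :=
  (∃ C : ℝ, ∀ n, 1 ≤ n → ‖x n‖ ≤ C) ∧
    Summable (fun n : ℕ => ‖x (n+2) - (starRingEnd ℂ) (x (n+1))‖)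

def MemD1N (N : ℕ) (x : ℕ → ℂ) : Prop := ∀ i < N, MemD1 (fun n => x (n*N+i))

/-- The quadratic form `v ↦ ⟨M v, v⟩`. -/
def Qform (M : Matrix (Fin 2) (Fin 2) ℂ) (v : Fin 2 → ℂ) : ℂ :=
  dotProduct (star v) (M.mulVec v)

def Qgam (a b : ℕ → ℂ) (N : ℕ) (γ : ℂ) (n : ℕ) (z : ℂ) (v : Fin 2 → ℂ) : ℂ :=
  Qform (symQ ((a (n+N-1) / (γ * (‖a (n+N-1)‖ : ℂ))) • (Ematrix * transfer a b N n z))) v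

def Qtil (a b : ℕ → ℂ) (N : ℕ) (γ : ℂ) (n : ℕ) (z : ℂ) (v : Fin 2 → ℂ) : ℂ :=
  Qform (symQ ((a (n+N-1) / (γ * (‖a (n+N-1)‖ : ℂ)) *
      (starRingEnd ℂ) (a (n+N-1) / a (n-1))) • (Ematrix * mconj (transfer a b N n z)))) v

/-- The `N`-shifted Turán determinant, expressed via a generalised eigenvector `u`. -/
def Sdet (a b : ℕ → ℂ) (N : ℕ) (γ : ℂ) (z : ℂ) (u : ℕ → ℂ) (n : ℕ) : ℂ :=
  (‖a (n+N-1)‖ : ℂ) * Qgam a b N γ n z ![u (n-1), u n]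

/-- Uniform non-degeneracy of a family of quadratic forms. -/
def UnifNonDeg (K : Set ℂ) (Q : ℕ → ℂ → (Fin 2 → ℂ) → ℂ) : Prop :=
  ∃ c₁ > (0:ℝ), ∃ c₂ > (0:ℝ), ∃ M : ℕ, 1 ≤ M ∧
    ∀ v : Fin 2 → ℂ, ∀ z ∈ K, ∀ n, M ≤ n →
      c₁ * (‖v 0‖^2 + ‖v 1‖^2) ≤ ‖Q n z v‖ ∧ ‖Q n z v‖ ≤ c₂ * (‖v 0‖^2 + ‖v 1‖^2)

def RealEntries (X : Matrix (Fin 2) (Fin 2) ℂ) : Prop := ∀ p q, (X p q).im = 0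

def discr (X : Matrix (Fin 2) (Fin 2) ℂ) : ℂ := (Matrix.trace X)^2 - 4 * X.det

/-- Periodic one-step matrix `𝔅_j(x)` (real). -/
def pB (α β : ℤ → ℝ) (j : ℤ) (x : ℝ) : Matrix (Fin 2) (Fin 2) ℝ :=
  !![0, 1; -(α (j-1) / α j), (x - β j) / α j]

/-- Periodic transfer matrix `𝔛_i(x) = 𝔅_{i+N-1}(x) ⋯ 𝔅_i(x)`. -/
def pX (α β : ℤ → ℝ) (N : ℕ) (i : ℤ) (x : ℝ) : Matrix (Fin 2) (Fin 2) ℝ :=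
  (((List.range N).map fun j => pB α β (i + j) x).reverse).prod

/-- The generalised eigenvector with initial data `α`. -/
def gev (a b : ℕ → ℂ) (z : ℂ) (α : Fin 2 → ℂ) : ℕ → ℂ
  | 0 => α 0
  | 1 => α 1
  | n+2 => ((z - b (n+1)) * gev a b z α (n+1) - a n * gev a b z α n) / a (n+1)

end

/-!
For `n = m * N + i` write `v_n = (u_{n-1}, u_n)`, so that `v_{n+N} = X_n v_n`. The identity
`X^* E conj(X) = conj(det X) E` and `det X_n = a_{n-1} / a_{n+N-1}` turn `S_n` into
`|a_{n+N-1}| Q̃_n(v_{n+N})`, a form in the same vector as `S_{n+N}`. Writing `Y_m` for the matrices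
of hypothesis (a), this gives
`|S_{n+N} - S_n| ≤ |a_{n+N-1}| ‖Y_{m+1} - conj Y_m‖ ‖v_{n+N}‖² ≤ (δ_m / c₁) |S_n|`,
with `δ_m` the summable variation of `(Y_m)` and `c₁` the lower constant of (b).
A sequence with summable relative increments is bounded by `exp (∑ δ_m / c₁)` times its first
term, hence uniformly Cauchy on the compact set `Ω × K`; and once the tail of the increments is
below `1/2` its terms stay above half their size, so the limit of the nonvanishing `S_n` is
nonzero.
-/

theorem tendstoUniformlyOn_comp_add_atTop_iff {X β : Type*} [UniformSpace β] {F : ℕ → X → β}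
    {f : X → β} {s : Set X} (k : ℕ) :
    TendstoUniformlyOn (fun n => F (n + k)) f atTop s ↔ TendstoUniformlyOn F f atTop s := by
  conv_rhs => rw [← map_add_atTop_eq_nat k]
  simp only [TendstoUniformlyOn, eventually_map]

section RelativeIncrements

open Finset

variable {X E : Type*} [NormedAddCommGroup E] {x : ℕ → E} {t : ℕ → X → E} {s : Set X} {r : ℕ → ℝ}

theorem norm_le_exp_sum_mul_of_norm_sub_le (hstep : ∀ m, ‖x (m + 1) - x m‖ ≤ r m * ‖x m‖)
    (m : ℕ) : ‖x m‖ ≤ Real.exp (∑ k ∈ range m, r k) * ‖x 0‖ := by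
  induction m with
  | zero => simp
  | succ m ih =>
    calc ‖x (m + 1)‖ ≤ ‖x m‖ + ‖x (m + 1) - x m‖ := norm_le_norm_add_norm_sub' (x (m + 1)) (x m)
      _ ≤ (1 + r m) * ‖x m‖ := by linarith [hstep m]
      _ ≤ Real.exp (r m) * (Real.exp (∑ k ∈ range m, r k) * ‖x 0‖) := by
          gcongr
          linarith [Real.add_one_le_exp (r m)]
      _ = Real.exp (∑ k ∈ range (m + 1), r k) * ‖x 0‖ := by
          rw [sum_range_succ, Real.exp_add]; ring

theorem one_sub_sum_mul_le_norm_of_norm_sub_le (hr0 : ∀ m, 0 ≤ r m) (hr1 : ∀ m, r m ≤ 1)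
    (hstep : ∀ m, ‖x (m + 1) - x m‖ ≤ r m * ‖x m‖) (m : ℕ) :
    (1 - ∑ k ∈ range m, r k) * ‖x 0‖ ≤ ‖x m‖ := by
  induction m with
  | zero => simp
  | succ m ih =>
    have hsum : 0 ≤ ∑ k ∈ range m, r k := sum_nonneg fun k _ => hr0 k
    have hnext : (1 - r m) * ‖x m‖ ≤ ‖x (m + 1)‖ := by
      linarith [hstep m, norm_le_norm_add_norm_sub' (x m) (x (m + 1)),
        norm_sub_rev (x m) (x (m + 1))]
    rw [sum_range_succ]
    nlinarith [mul_le_mul_of_nonneg_left ih (sub_nonneg.2 (hr1 m)),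
      mul_nonneg (mul_nonneg (hr0 m) hsum) (norm_nonneg (x 0))]

theorem ne_zero_of_tendsto_of_norm_sub_le (hr0 : ∀ m, 0 ≤ r m) (hr : Summable r)
    (hstep : ∀ m, ‖x (m + 1) - x m‖ ≤ r m * ‖x m‖) (hx : ∀ m, x m ≠ 0) {L : E}
    (hL : Tendsto x atTop (𝓝 L)) : L ≠ 0 := by
  obtain ⟨M, hM⟩ := ((tendsto_order.1 (tendsto_sum_nat_add r)).2 (1 / 2) one_half_pos).exists
  have hrM : Summable fun k => r (k + M) := (summable_nat_add_iff M).2 hr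
  have hpartial (m : ℕ) : ∑ k ∈ range m, r (k + M) ≤ 1 / 2 :=
    (hrM.sum_le_tsum _ fun k _ => hr0 _).trans hM.le
  have hlower (m : ℕ) : 1 / 2 * ‖x M‖ ≤ ‖x (m + M)‖ := by
    have hk := one_sub_sum_mul_le_norm_of_norm_sub_le (x := fun k => x (k + M))
      (fun k => hr0 _) (fun k => by linarith [hrM.le_tsum k fun j _ => hr0 (j + M)])
      (fun k => by simpa [add_right_comm] using hstep (k + M)) m
    simp only [zero_add] at hk
    nlinarith [hpartial m, norm_nonneg (x M)]
  have hge : 1 / 2 * ‖x M‖ ≤ ‖L‖ :=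
    ge_of_tendsto ((tendsto_add_atTop_iff_nat M).2 hL).norm (Eventually.of_forall hlower)
  rw [← norm_pos_iff]
  linarith [norm_pos_iff.2 (hx M)]

theorem exists_tendstoUniformlyOn_of_norm_sub_le [CompleteSpace E] (hr0 : ∀ m, 0 ≤ r m)
    (hr : Summable r) {C : ℝ} (hC : ∀ p ∈ s, ‖t 0 p‖ ≤ C)
    (hstep : ∀ m, ∀ p ∈ s, ‖t (m + 1) p - t m p‖ ≤ r m * ‖t m p‖) :
    ∃ g, TendstoUniformlyOn t g atTop s := by
  have hbound (m : ℕ) (p : X) (hp : p ∈ s) :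
      ‖t (m + 1) p - t m p‖ ≤ r m * (Real.exp (∑' k, r k) * C) := by
    refine (hstep m p hp).trans (mul_le_mul_of_nonneg_left ?_ (hr0 m))
    calc ‖t m p‖ ≤ Real.exp (∑ k ∈ range m, r k) * ‖t 0 p‖ :=
          norm_le_exp_sum_mul_of_norm_sub_le (x := fun k => t k p) (fun k => hstep k p hp) m
      _ ≤ Real.exp (∑' k, r k) * C := by
          gcongr
          · exact hr.sum_le_tsum _ fun k _ => hr0 k
          · exact hC p hp
  have hconst : TendstoUniformlyOn (fun _ : ℕ => t 0) (t 0) atTop s :=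
    fun u hu => Eventually.of_forall fun _ _ _ => refl_mem_uniformity hu
  have hsum := hconst.fun_add (tendstoUniformlyOn_tsum_nat (hr.mul_right _) hbound)
  refine ⟨_, hsum.congr (Eventually.of_forall fun m p _ => ?_)⟩
  simp only [sum_range_sub (fun k => t k p), add_sub_cancel]

theorem exists_tendstoUniformlyOn_ne_zero_of_norm_sub_le [CompleteSpace E] (M : ℕ)
    (hr0 : ∀ m, 0 ≤ r m) (hr : Summable r) {C : ℝ} (hC : ∀ p ∈ s, ‖t M p‖ ≤ C)
    (hstep : ∀ m, M ≤ m → ∀ p ∈ s, ‖t (m + 1) p - t m p‖ ≤ r m * ‖t m p‖)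
    (hne : ∀ m, M ≤ m → ∀ p ∈ s, t m p ≠ 0) :
    ∃ g, TendstoUniformlyOn t g atTop s ∧ ∀ p ∈ s, g p ≠ 0 := by
  have hrM := (summable_nat_add_iff M).2 hr
  have hstepM (k : ℕ) (p : X) (hp : p ∈ s) :
      ‖t (k + 1 + M) p - t (k + M) p‖ ≤ r (k + M) * ‖t (k + M) p‖ := by
    simpa [add_right_comm] using hstep (k + M) (by omega) p hp
  obtain ⟨g, hg⟩ := exists_tendstoUniformlyOn_of_norm_sub_le (t := fun k => t (k + M))
    (fun k => hr0 _) hrM (by simpa using hC) hstepM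
  rw [tendstoUniformlyOn_comp_add_atTop_iff] at hg
  exact ⟨g, hg, fun p hp => ne_zero_of_tendsto_of_norm_sub_le (x := fun k => t (k + M) p)
    (fun k => hr0 _) hrM (fun k => hstepM k p hp) (fun k => hne (k + M) (by omega) p hp)
    ((tendsto_add_atTop_iff_nat M).2 (hg.tendsto_at hp))⟩

end RelativeIncrements

open scoped Matrix.Norms.L2Operator

section QuadraticForm

variable (A B : Matrix (Fin 2) (Fin 2) ℂ) (v : Fin 2 → ℂ)

theorem Qform_add : Qform (A + B) v = Qform A v + Qform B v := by
  simp only [Qform, add_mulVec, dotProduct_add]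

theorem Qform_sub : Qform (A - B) v = Qform A v - Qform B v := by
  simp only [Qform, sub_mulVec, dotProduct_sub]

theorem Qform_smul (c : ℂ) : Qform (c • A) v = c * Qform A v := by
  simp only [Qform, smul_mulVec, dotProduct_smul, smul_eq_mul]

theorem Qform_mulVec (X : Matrix (Fin 2) (Fin 2) ℂ) : Qform A (X *ᵥ v) = Qform (Xᴴ * A * X) v := by
  simp only [Qform, star_mulVec, mulVec_mulVec, dotProduct_mulVec, vecMul_vecMul, Matrix.mul_assoc]

theorem Qform_conjTranspose : Qform Aᴴ v = star (Qform A v) := by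
  rw [Qform, Qform, star_dotProduct, star_mulVec, conjTranspose_conjTranspose, dotProduct_mulVec]

theorem Qform_symQ : Qform (symQ A) v = ((Qform A v).re : ℂ) := by
  rw [symQ, Qform_smul, Qform_add, Qform_conjTranspose, Complex.re_eq_add_conj, Complex.star_def]
  ring

theorem sq_norm_toLp : ‖WithLp.toLp 2 v‖ ^ 2 = ‖v 0‖ ^ 2 + ‖v 1‖ ^ 2 := by
  rw [EuclideanSpace.norm_eq, Real.sq_sqrt (by positivity), Fin.sum_univ_two]

theorem norm_Qform_le : ‖Qform A v‖ ≤ ‖A‖ * (‖v 0‖ ^ 2 + ‖v 1‖ ^ 2) := by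
  rw [← sq_norm_toLp]
  calc ‖Qform A v‖ = ‖inner ℂ (WithLp.toLp 2 v) (WithLp.toLp 2 (A *ᵥ v))‖ := by
        rw [EuclideanSpace.inner_eq_star_dotProduct, Qform, dotProduct_comm]
    _ ≤ ‖WithLp.toLp 2 v‖ * ‖WithLp.toLp 2 (A *ᵥ v)‖ := norm_inner_le_norm _ _
    _ ≤ ‖WithLp.toLp 2 v‖ * (‖A‖ * ‖WithLp.toLp 2 v‖) := by
        gcongr; exact A.l2_opNorm_mulVec (WithLp.toLp 2 v)
    _ = ‖A‖ * ‖WithLp.toLp 2 v‖ ^ 2 := by ring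

theorem norm_Ematrix_le : ‖Ematrix‖ ≤ 1 := by
  refine ContinuousLinearMap.opNorm_le_bound _ zero_le_one fun x => ?_
  rw [one_mul, EuclideanSpace.norm_eq, EuclideanSpace.norm_eq]
  simp [Ematrix, Fin.sum_univ_two, vecHead, vecTail, add_comm (‖x.ofLp 1‖ ^ 2)]

theorem conjTranspose_mul_Ematrix_mul_mconj (X : Matrix (Fin 2) (Fin 2) ℂ) :
    Xᴴ * Ematrix * mconj X = starRingEnd ℂ X.det • Ematrix := by
  ext p q
  fin_cases p <;> fin_cases q <;>
    simp [Ematrix, mconj, mul_apply, Fin.sum_univ_two, det_fin_two] <;> ring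

theorem mconj_smul (c : ℂ) (X : Matrix (Fin 2) (Fin 2) ℂ) : mconj (c • X) = starRingEnd ℂ c • mconj X := by
  ext p q
  simp [mconj]

theorem Qform_Ematrix_mconj_mulVec (X : Matrix (Fin 2) (Fin 2) ℂ) :
    Qform (Ematrix * mconj X) (X *ᵥ v) = starRingEnd ℂ X.det * Qform (Ematrix * X) v := by
  rw [Qform_mulVec, ← Matrix.mul_assoc, conjTranspose_mul_Ematrix_mul_mconj, smul_mul, Qform_smul]

theorem ofReal_mul_Qform_symQ (r : ℝ) (q : ℂ) :
    (r : ℂ) * Qform (symQ (q • A)) v = ((Qform (((r : ℂ) * q) • A) v).re : ℂ) := by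
  rw [Qform_symQ, Qform_smul, Qform_smul, mul_assoc, Complex.re_ofReal_mul, Complex.ofReal_mul]

end QuadraticForm

section Jacobi

variable (a b : ℕ → ℂ) (N : ℕ) (z : ℂ)

theorem transfer_zero (n : ℕ) : transfer a b 0 n z = 1 := by
  simp [transfer]

theorem transfer_succ (n : ℕ) :
    transfer a b (N + 1) n z = Bmat a b (n + N) z * transfer a b N n z := by
  simp [transfer, List.range_succ]

variable {a}

theorem det_transfer (ha : ∀ n, a n ≠ 0) {n : ℕ} (hn : 1 ≤ n) :
    (transfer a b N n z).det = a (n - 1) / a (n + N - 1) := by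
  induction N with
  | zero => simp [transfer_zero, div_self (ha _)]
  | succ N ih =>
    obtain ⟨k, rfl⟩ : ∃ k, n = k + 1 := ⟨n - 1, by omega⟩
    simp only [transfer_succ, det_mul, ih, Bmat, det_fin_two_of, Nat.add_sub_cancel,
      show k + 1 + (N + 1) - 1 = k + N + 1 by omega,
      show k + 1 + N = k + N + 1 by omega]
    field_simp [ha]
    ring

theorem Bmat_mulVec_gev (ha : ∀ n, a n ≠ 0) (α : Fin 2 → ℂ) {n : ℕ} (hn : 1 ≤ n) :
    Bmat a b n z *ᵥ ![gev a b z α (n - 1), gev a b z α n]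
      = ![gev a b z α n, gev a b z α (n + 1)] := by
  obtain ⟨k, rfl⟩ : ∃ k, n = k + 1 := ⟨n - 1, by omega⟩
  ext p
  fin_cases p
  · simp [Bmat]
  · have hrec : gev a b z α (k + 2)
        = ((z - b (k + 1)) * gev a b z α (k + 1) - a k * gev a b z α k) / a (k + 1) := rfl
    simp only [mulVec, Bmat, add_tsub_cancel_right, Fin.mk_one, of_apply, cons_val',
      cons_val_fin_one, cons_val_one, dotProduct_cons, head_cons, tail_cons, dotProduct_of_isEmpty,
      add_zero, hrec]
    field_simp [ha]
    ring

theorem transfer_mulVec_gev (ha : ∀ n, a n ≠ 0) (α : Fin 2 → ℂ) {n : ℕ} (hn : 1 ≤ n) :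
    transfer a b N n z *ᵥ ![gev a b z α (n - 1), gev a b z α n]
      = ![gev a b z α (n + N - 1), gev a b z α (n + N)] := by
  induction N with
  | zero => simp [transfer_zero]
  | succ N ih =>
    rw [transfer_succ, ← mulVec_mulVec, ih, Bmat_mulVec_gev b z ha α (by omega),
      show n + (N + 1) - 1 = n + N by omega, ← add_assoc]

theorem gev_pair_ne_zero (ha : ∀ n, a n ≠ 0) {α : Fin 2 → ℂ} (hα : α ≠ 0) {n : ℕ} (hn : 1 ≤ n) :
    ![gev a b z α (n - 1), gev a b z α n] ≠ 0 := by
  have h := transfer_mulVec_gev b (n - 1) z ha α le_rfl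
  rw [show 1 + (n - 1) - 1 = n - 1 by omega, show 1 + (n - 1) = n by omega] at h
  have hinit : ![gev a b z α (1 - 1), gev a b z α 1] = α := by
    ext p; fin_cases p <;> rfl
  rw [← h, hinit]
  intro h0
  exact hα (eq_zero_of_mulVec_eq_zero (by simp [det_transfer b (n - 1) z ha le_rfl, ha]) h0)

end Jacobi

section Continuity

variable (a b : ℕ → ℂ) (N : ℕ)

theorem continuous_gev (n : ℕ) : Continuous fun p : (Fin 2 → ℂ) × ℂ => gev a b p.2 p.1 n := by
  induction n using Nat.twoStepInduction with
  | zero => exact (continuous_apply 0).comp continuous_fst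
  | one => exact (continuous_apply 1).comp continuous_fst
  | more n ih₁ ih₂ =>
    exact (((continuous_snd.sub continuous_const).mul ih₂).sub
      (continuous_const.mul ih₁)).div_const _

theorem continuous_transfer (n : ℕ) : Continuous fun z => transfer a b N n z := by
  induction N with
  | zero => simp only [transfer_zero]; exact continuous_const
  | succ N ih =>
    simp only [transfer_succ]
    refine Continuous.matrix_mul (continuous_matrix fun p q => ?_) ih
    fin_cases p <;> fin_cases q <;>
      simp only [Bmat, Fin.zero_eta, Fin.mk_one, of_apply, cons_val', cons_val_zero, cons_val_one,
        cons_val_fin_one] <;> fun_prop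

theorem continuous_Sdet (γ : ℂ) (n : ℕ) :
    Continuous fun p : (Fin 2 → ℂ) × ℂ => Sdet a b N γ p.2 (gev a b p.2 p.1) n := by
  have hX := (continuous_transfer a b N n).comp (continuous_snd (X := Fin 2 → ℂ))
  have hM : Continuous fun p : (Fin 2 → ℂ) × ℂ =>
      symQ ((a (n + N - 1) / (γ * (‖a (n + N - 1)‖ : ℂ))) • (Ematrix * transfer a b N n p.2)) := by
    have hEX := ((continuous_const (y := Ematrix)).matrix_mul hX).const_smul
      (a (n + N - 1) / (γ * (‖a (n + N - 1)‖ : ℂ)))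
    exact (hEX.add hEX.matrix_conjTranspose).const_smul (2⁻¹ : ℂ)
  have hv : Continuous fun p : (Fin 2 → ℂ) × ℂ => ![gev a b p.2 p.1 (n - 1), gev a b p.2 p.1 n] :=
    continuous_pi fun j => by fin_cases j <;> simp [continuous_gev]
  exact continuous_const.mul (hv.star.dotProduct (hM.matrix_mulVec hv))

end Continuity

section TuranDeterminant

variable {a : ℕ → ℂ} (b : ℕ → ℂ) (N : ℕ) (γ z : ℂ)

theorem Sdet_eq_re (ha : ∀ n, a n ≠ 0) (u : ℕ → ℂ) (n : ℕ) :
    Sdet a b N γ z u n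
      = ((Qform ((a (n + N - 1) / γ) • (Ematrix * transfer a b N n z))
          ![u (n - 1), u n]).re : ℂ) := by
  have hnorm : (‖a (n + N - 1)‖ : ℂ) ≠ 0 := by simpa using ha _
  rw [Sdet, Qgam, ofReal_mul_Qform_symQ]
  congr 4
  field_simp

theorem norm_mul_Qtil_eq_re (ha : ∀ n, a n ≠ 0) (n : ℕ) (w : Fin 2 → ℂ) :
    (‖a (n + N - 1)‖ : ℂ) * Qtil a b N γ n z w
      = ((Qform ((a (n + N - 1) / γ) •
          (Ematrix * mconj ((a (n + N - 1) / a (n - 1)) • transfer a b N n z))) w).re : ℂ) := by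
  have hnorm : (‖a (n + N - 1)‖ : ℂ) ≠ 0 := by simpa using ha _
  rw [Qtil, ofReal_mul_Qform_symQ, mconj_smul, Matrix.mul_smul, smul_smul]
  congr 4
  field_simp

theorem Sdet_eq_norm_mul_Qtil (ha : ∀ n, a n ≠ 0) (α : Fin 2 → ℂ) {n : ℕ} (hn : 1 ≤ n) :
    Sdet a b N γ z (gev a b z α) n
      = ‖a (n + N - 1)‖ * Qtil a b N γ n z ![gev a b z α (n + N - 1), gev a b z α (n + N)] := by
  have hdet : a (n + N - 1) / a (n - 1) * (transfer a b N n z).det = 1 := by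
    rw [det_transfer b N z ha hn]
    field_simp [ha]
  rw [Sdet_eq_re b N γ z ha, norm_mul_Qtil_eq_re b N γ z ha, ← transfer_mulVec_gev b N z ha α hn,
    Qform_smul, Qform_smul, mconj_smul, Matrix.mul_smul, Qform_smul, Qform_Ematrix_mconj_mulVec,
    ← mul_assoc (starRingEnd ℂ _), ← map_mul, hdet, map_one, one_mul]

theorem norm_Sdet_eq (ha : ∀ n, a n ≠ 0) (α : Fin 2 → ℂ) {n : ℕ} (hn : 1 ≤ n) :
    ‖Sdet a b N γ z (gev a b z α) n‖
      = ‖a (n + N - 1)‖ * ‖Qtil a b N γ n z ![gev a b z α (n + N - 1), gev a b z α (n + N)]‖ := by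
  rw [Sdet_eq_norm_mul_Qtil b N γ z ha α hn, norm_mul, Complex.norm_real, norm_norm]

theorem Sdet_add_sub_eq_re (ha : ∀ n, a n ≠ 0) (α : Fin 2 → ℂ) {n : ℕ} (hn : 1 ≤ n) :
    Sdet a b N γ z (gev a b z α) (n + N) - Sdet a b N γ z (gev a b z α) n
      = ((Qform ((a (n + N - 1) / γ) • (Ematrix *
          ((a (n + N + N - 1) / a (n + N - 1)) • transfer a b N (n + N) z
            - mconj ((a (n + N - 1) / a (n - 1)) • transfer a b N n z))))
          ![gev a b z α (n + N - 1), gev a b z α (n + N)]).re : ℂ) := by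
  have hscalar :
      a (n + N + N - 1) / γ = a (n + N - 1) / γ * (a (n + N + N - 1) / a (n + N - 1)) := by
    field_simp [ha]
  rw [Sdet_eq_norm_mul_Qtil b N γ z ha α hn, norm_mul_Qtil_eq_re b N γ z ha, Sdet_eq_re b N γ z ha,
    hscalar, ← smul_smul, ← Matrix.mul_smul, ← Complex.ofReal_sub,
    ← Complex.sub_re, ← Qform_sub, ← smul_sub, ← Matrix.mul_sub]

theorem norm_Sdet_add_sub_le (ha : ∀ n, a n ≠ 0) (hγ : ‖γ‖ = 1) (α : Fin 2 → ℂ) {n : ℕ}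
    (hn : 1 ≤ n) :
    ‖Sdet a b N γ z (gev a b z α) (n + N) - Sdet a b N γ z (gev a b z α) n‖
      ≤ ‖a (n + N - 1)‖ * ‖(a (n + N + N - 1) / a (n + N - 1)) • transfer a b N (n + N) z
            - mconj ((a (n + N - 1) / a (n - 1)) • transfer a b N n z)‖
        * (‖gev a b z α (n + N - 1)‖ ^ 2 + ‖gev a b z α (n + N)‖ ^ 2) := by
  rw [Sdet_add_sub_eq_re b N γ z ha α hn, Complex.norm_real, Real.norm_eq_abs]
  refine (Complex.abs_re_le_norm _).trans ((norm_Qform_le _ _).trans ?_)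
  simp only [cons_val_zero, cons_val_one]
  gcongr
  rw [norm_smul, norm_div, hγ, div_one]
  gcongr
  exact (l2_opNorm_mul _ _).trans (mul_le_of_le_one_left (norm_nonneg _) norm_Ematrix_le)

theorem norm_Sdet_add_sub_le_mul_norm (ha : ∀ n, a n ≠ 0) (hγ : ‖γ‖ = 1) (α : Fin 2 → ℂ)
    {n : ℕ} (hn : 1 ≤ n) {c δ : ℝ} (hc : 0 < c)
    (hQ : ∀ v, c * (‖v 0‖ ^ 2 + ‖v 1‖ ^ 2) ≤ ‖Qtil a b N γ n z v‖)
    (hδ : ‖(a (n + N + N - 1) / a (n + N - 1)) • transfer a b N (n + N) z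
            - mconj ((a (n + N - 1) / a (n - 1)) • transfer a b N n z)‖ ≤ δ) :
    ‖Sdet a b N γ z (gev a b z α) (n + N) - Sdet a b N γ z (gev a b z α) n‖
      ≤ δ / c * ‖Sdet a b N γ z (gev a b z α) n‖ := by
  have hQw := hQ ![gev a b z α (n + N - 1), gev a b z α (n + N)]
  simp only [cons_val_zero, cons_val_one] at hQw
  rw [norm_Sdet_eq b N γ z ha α hn]
  have hδ0 : 0 ≤ δ := (norm_nonneg _).trans hδ
  calc _ ≤ _ := norm_Sdet_add_sub_le b N γ z ha hγ α hn
    _ ≤ ‖a (n + N - 1)‖ * δ * (‖gev a b z α (n + N - 1)‖ ^ 2 + ‖gev a b z α (n + N)‖ ^ 2) := by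
        gcongr
    _ = δ / c * (‖a (n + N - 1)‖
          * (c * (‖gev a b z α (n + N - 1)‖ ^ 2 + ‖gev a b z α (n + N)‖ ^ 2))) := by
        field_simp
    _ ≤ _ := by gcongr

theorem Sdet_ne_zero (ha : ∀ n, a n ≠ 0) {α : Fin 2 → ℂ} (hα : α ≠ 0) {n : ℕ} (hn : 1 ≤ n)
    {c : ℝ} (hc : 0 < c)
    (hQ : ∀ v, c * (‖v 0‖ ^ 2 + ‖v 1‖ ^ 2) ≤ ‖Qtil a b N γ n z v‖) :
    Sdet a b N γ z (gev a b z α) n ≠ 0 := by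
  have hw := gev_pair_ne_zero b z ha hα (n := n + N) (by omega)
  have hsq : 0 < ‖gev a b z α (n + N - 1)‖ ^ 2 + ‖gev a b z α (n + N)‖ ^ 2 := by
    simpa [sq_norm_toLp] using pow_pos (norm_pos_iff.2 ((WithLp.toLp_eq_zero 2).not.2 hw)) 2
  have hQw := hQ ![gev a b z α (n + N - 1), gev a b z α (n + N)]
  simp only [cons_val_zero, cons_val_one] at hQw
  rw [← norm_pos_iff, norm_Sdet_eq b N γ z ha α hn]
  exact mul_pos (norm_pos_iff.2 (ha _)) ((mul_pos hc hsq).trans_le hQw)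

end TuranDeterminant

open Filter Matrix Topology in
theorem statement9_general
    (a b : ℕ → ℂ) (ha : ∀ n, a n ≠ 0)
    (N : ℕ) (hN : 1 ≤ N) (i : ℕ)
    (γ : ℂ) (hγ : ‖γ‖ = 1)
    (K : Set ℂ) (hK : IsCompact K)
    (Ω : Set (Fin 2 → ℂ)) (hΩ : IsCompact Ω)
    (hΩ0 : ∀ α ∈ Ω, α ≠ 0)
    (hD1 : MemD1K K
      (fun n z => (a ((n+1)*N+i-1) / a (n*N+i-1)) • transfer a b N (n*N+i) z))
    (hQ : UnifNonDeg K (fun n z v => Qtil a b N γ (n*N+i) z v)) :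
    ∃ g : (Fin 2 → ℂ) × ℂ → ℂ,
      TendstoUniformlyOn
        (fun n p => Sdet a b N γ p.2 (gev a b p.2 p.1) (n*N+i)) g atTop (Ω ×ˢ K) ∧
      ContinuousOn (fun p => ‖g p‖) (Ω ×ˢ K) ∧
      ∀ p ∈ Ω ×ˢ K, 0 < ‖g p‖ := by
  obtain ⟨-, -, -, δ, hδ, hδY⟩ := hD1
  obtain ⟨c, hc, _, _, M, hM, hQ⟩ := hQ
  set t : ℕ → (Fin 2 → ℂ) × ℂ → ℂ := fun m p => Sdet a b N γ p.2 (gev a b p.2 p.1) (m * N + i)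
  have hindex (m : ℕ) (hm : M ≤ m) : 1 ≤ m * N + i :=
    Nat.le_add_right_of_le (Nat.mul_le_mul (hM.trans hm) hN)
  have hstep (m : ℕ) (hm : M ≤ m) (p) (hp : p ∈ Ω ×ˢ K) :
      ‖t (m + 1) p - t m p‖ ≤ |δ m| / c * ‖t m p‖ := by
    have hY := (hδY m (hM.trans hm) p.2 hp.2).trans (le_abs_self _)
    dsimp only at hY
    rw [show (m + 1 + 1) * N + i - 1 = m * N + i + N + N - 1 by ring_nf,
      show (m + 1) * N + i = m * N + i + N by ring] at hY
    simp only [t, show (m + 1) * N + i = m * N + i + N by ring]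
    exact norm_Sdet_add_sub_le_mul_norm b N γ p.2 ha hγ p.1 (hindex m hm) hc
      (fun v => (hQ v p.2 hp.2 m hm).1) hY
  have hne (m : ℕ) (hm : M ≤ m) (p) (hp : p ∈ Ω ×ˢ K) : t m p ≠ 0 :=
    Sdet_ne_zero b N γ p.2 ha (hΩ0 p.1 hp.1) (hindex m hm) hc
      fun v => (hQ v p.2 hp.2 m hm).1
  obtain ⟨C, hC⟩ := (hΩ.prod hK).exists_bound_of_continuousOn
    (continuous_Sdet a b N γ (M * N + i)).continuousOn
  obtain ⟨g, hg, hg0⟩ := exists_tendstoUniformlyOn_ne_zero_of_norm_sub_le M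
    (fun m => by positivity) (hδ.abs.div_const c) hC hstep hne
  have hcont : ContinuousOn g (Ω ×ˢ K) := hg.continuousOn <| Frequently.of_forall fun m =>
    (continuous_Sdet a b N γ (m * N + i)).continuousOn
  exact ⟨g, hg, hcont.norm, fun p hp => norm_pos_iff.2 (hg0 p hp)⟩

open Filter Matrix Topology in
/-- Theorem 2: uniform convergence of the shifted Turán determinants to a
function whose absolute value is continuous and strictly positive. -/
theorem statement9
    (a b : ℕ → ℂ) (ha : ∀ n, a n ≠ 0)
    (N : ℕ) (hN : 1 ≤ N) (i : ℕ) (hi : i < N)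
    (γ : ℂ) (hγ : ‖γ‖ = 1)
    (K : Set ℂ) (hK : IsCompact K) (hKconn : IsConnected K)
    (Ω : Set (Fin 2 → ℂ)) (hΩ : IsCompact Ω) (hΩconn : IsConnected Ω)
    (hΩ0 : ∀ α ∈ Ω, α ≠ 0)
    (hD1 : MemD1K K
      (fun n z => (a ((n+1)*N+i-1) / a (n*N+i-1)) • transfer a b N (n*N+i) z))
    (hQ : UnifNonDeg K (fun n z v => Qtil a b N γ (n*N+i) z v)) :
    ∃ g : (Fin 2 → ℂ) × ℂ → ℂ,
      TendstoUniformlyOn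
        (fun n p => Sdet a b N γ p.2 (gev a b p.2 p.1) (n*N+i)) g atTop (Ω ×ˢ K) ∧
      ContinuousOn (fun p => ‖g p‖) (Ω ×ˢ K) ∧
      ∀ p ∈ Ω ×ˢ K, 0 < ‖g p‖ :=
  statement9_general a b ha N hN i γ hγ K hK Ω hΩ hΩ0 hD1 hQ
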